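/- For each c ≥ 2 and each nonnegative integrable kernel K with ∫_ℝ K = 1 there exists a constant U(c, K) ≥ 1, depending only on c and K, such that: every positive bounded C² solution φ of the truncated profile equation φ'' − cφ' + g_β(φ)(1 − K*φ) = 0 with β > U(c, K) and lim_{t→−∞} φ(t) = 0 satisfies 0 < φ(t) ≤ U(c, K) for all t ∈ ℝ. Moreover, if ∫_0^{+∞} K(s) ds > 0, then one may take U(c, K) = (∫_0^{+∞} e^{−λ(c)s} K(s) ds)^{−1}. -/

import Mathlib

open Filter MeasureTheory Real Set

noncomputable def conv (K φ : ℝ → ℝ) (t : ℝ) : ℝ := ∫ s, K s * φ (t - s)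

noncomputable def gbeta (β u : ℝ) : ℝ := if u ≤ β then u else max 0 (2 * β - u)

def TruncProfileEq (K : ℝ → ℝ) (c β : ℝ) (φ : ℝ → ℝ) : Prop :=
  ∀ t, deriv (deriv φ) t - c * deriv φ t + gbeta β (φ t) * (1 - conv K φ t) = 0

noncomputable def lam (c : ℝ) : ℝ := (c - Real.sqrt (c ^ 2 - 4)) / 2

/-!
Because `g_β(u) ≤ u` and `K * φ ≥ 0`, a positive solution satisfies `φ'' - cφ' + φ ≥ 0`; as
`λ (c - λ) = 1`, the function `e^{-(c-λ)t} (φ' - λφ)` is nondecreasing, and boundedness of `φ`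
forces `φ' ≤ λφ`. Hence `e^{-λt} φ` is nonincreasing, so `(K * φ)(t) ≥ J_h φ(t + h)` with
`J_h = ∫_{-h}^∞ e^{-λ(s+h)} K(s) ds`.

Wherever `K * φ > 1` the equation gives `φ'' ≥ cφ'`, and a bounded function cannot increase on
such a region. If `∫_0^∞ K > 0`, then `K * φ ≥ J_0 φ > 1` wherever `φ > J_0⁻¹`, which gives the
explicit bound. In general pick `h` with `J_h > 0`. At the first time `φ` reaches a level
`L ≤ β` the equation is untruncated, and `φ'' - cφ' ≳ L²` on `[t - h - 2, t - h]`; then `φ`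
would drop by `≳ L²` over a unit interval while staying in `(0, L]`, impossible for large `L`.
-/

lemma lam_pos {c : ℝ} (hc : 2 ≤ c) : 0 < lam c := by
  have h : √(c ^ 2 - 4) < √(c ^ 2) := Real.sqrt_lt_sqrt (by nlinarith) (by linarith)
  rw [Real.sqrt_sq (by linarith)] at h
  unfold lam
  linarith

lemma lam_sq_sub_mul_add_one {c : ℝ} (hc : 2 ≤ c) : lam c ^ 2 - c * lam c + 1 = 0 := by
  have h : √(c ^ 2 - 4) ^ 2 = c ^ 2 - 4 := Real.sq_sqrt (by nlinarith)
  unfold lam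
  linear_combination h / 4

lemma gbeta_nonneg {β u : ℝ} (hu : 0 ≤ u) : 0 ≤ gbeta β u := by
  unfold gbeta
  split_ifs
  exacts [hu, le_max_left _ _]

lemma gbeta_le_self {β u : ℝ} (hu : 0 ≤ u) : gbeta β u ≤ u := by
  unfold gbeta
  split_ifs with h
  · exact le_rfl
  · exact max_le hu (by linarith [not_le.1 h])

lemma gbeta_of_le {β u : ℝ} (h : u ≤ β) : gbeta β u = u := if_pos h

lemma conv_nonneg {K φ : ℝ → ℝ} (hK0 : ∀ᵐ s, 0 ≤ K s) (hφ : ∀ t, 0 ≤ φ t) (t : ℝ) :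
    0 ≤ conv K φ t :=
  integral_nonneg_of_ae (hK0.mono fun _ hs => mul_nonneg hs (hφ _))

lemma ContDiff.differentiable_deriv_of_two {φ : ℝ → ℝ} (h : ContDiff ℝ 2 φ) :
    Differentiable ℝ (deriv φ) := by
  simpa using h.differentiable_iteratedDeriv' 1

namespace TruncProfileEq

variable {K φ : ℝ → ℝ} {c β : ℝ}

lemma deriv_deriv_sub (heq : TruncProfileEq K c β φ) (t : ℝ) :
    deriv (deriv φ) t - c * deriv φ t = gbeta β (φ t) * (conv K φ t - 1) := by
  linear_combination heq t

lemma deriv_deriv_sub_add_nonneg (heq : TruncProfileEq K c β φ) (hK0 : ∀ᵐ s, 0 ≤ K s)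
    (hpos : ∀ t, 0 < φ t) (t : ℝ) : 0 ≤ deriv (deriv φ) t - c * deriv φ t + φ t := by
  have hg := gbeta_le_self (β := β) (hpos t).le
  have := mul_nonneg (gbeta_nonneg (β := β) (hpos t).le)
    (conv_nonneg hK0 (fun t => (hpos t).le) t)
  rw [heq.deriv_deriv_sub]
  linarith

end TruncProfileEq

lemma exp_mul_le_of_mul_le_deriv {g g' : ℝ → ℝ} {k a b : ℝ} (hg : ∀ x, HasDerivAt g (g' x) x)
    (hle : ∀ x ∈ Ioo a b, k * g x ≤ g' x) (hab : a ≤ b) : exp (k * (b - a)) * g a ≤ g b := by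
  have hF : ∀ x, HasDerivAt (fun y => exp (-k * y) * g y) (exp (-k * x) * (g' x - k * g x)) x := by
    intro x
    have hexp : HasDerivAt (fun y => exp (-k * y)) (exp (-k * x) * -k) x := by
      simpa using ((hasDerivAt_id x).const_mul (-k)).exp
    exact (hexp.mul (hg x)).congr_deriv (by ring)
  have hmono : MonotoneOn (fun y => exp (-k * y) * g y) (Icc a b) := by
    refine monotoneOn_of_deriv_nonneg (convex_Icc a b) (HasDerivAt.continuousOn fun x _ => hF x)
      (fun x _ => (hF x).differentiableAt.differentiableWithinAt) fun x hx => ?_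
    rw [interior_Icc] at hx
    rw [(hF x).deriv]
    exact mul_nonneg (exp_pos _).le (sub_nonneg.2 (hle x hx))
  have hab' := hmono (left_mem_Icc.2 hab) (right_mem_Icc.2 hab) hab
  calc exp (k * (b - a)) * g a = exp (k * b) * (exp (-k * a) * g a) := by
        rw [← mul_assoc, ← exp_add]; ring_nf
    _ ≤ exp (k * b) * (exp (-k * b) * g b) := mul_le_mul_of_nonneg_left hab' (exp_pos _).le
    _ = g b := by rw [← mul_assoc, ← exp_add]; simp

lemma not_bddAbove_range_of_le_deriv {φ : ℝ → ℝ} (hφ : Differentiable ℝ φ) {d t₁ : ℝ}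
    (hd : 0 < d) (hle : ∀ t, t₁ ≤ t → d ≤ deriv φ t) : ¬BddAbove (range φ) := by
  rintro ⟨M, hM⟩
  have hgrowth := (convex_Ici t₁).mul_sub_le_image_sub_of_le_deriv hφ.continuous.continuousOn
    hφ.differentiableOn (fun x hx => hle x (interior_subset hx))
  set t := t₁ + (M - φ t₁ + 1) / d
  have hdt : d * (t - t₁) = M - φ t₁ + 1 := by simp only [t]; field_simp; ring
  have hMt₁ : φ t₁ ≤ M := hM (mem_range_self _)
  have ht : t₁ ≤ t := by simp only [t]; linarith [div_nonneg (by linarith : 0 ≤ M - φ t₁ + 1) hd.le]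
  linarith [hgrowth t₁ self_mem_Ici t ht ht, hM (mem_range_self t)]

section SecondOrder

variable {φ : ℝ → ℝ} {c : ℝ}

/-- Since `μ (c - μ) = 1`, `(φ' - μφ)' - (c - μ)(φ' - μφ) = φ'' - cφ' + φ`. -/
lemma deriv_le_mul_of_bddAbove (hφ : Differentiable ℝ φ) (hφ' : Differentiable ℝ (deriv φ))
    (hpos : ∀ t, 0 < φ t) (hbdd : BddAbove (range φ)) {μ : ℝ} (hμ : 0 < μ)
    (hroot : μ ^ 2 - c * μ + 1 = 0)
    (hsuper : ∀ t, 0 ≤ deriv (deriv φ) t - c * deriv φ t + φ t) (t : ℝ) :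
    deriv φ t ≤ μ * φ t := by
  by_contra! ht
  have hk : 0 ≤ c - μ := by nlinarith
  have hgrowth : ∀ s, t ≤ s → deriv φ t - μ * φ t ≤ deriv φ s - μ * φ s := fun s hs => by
    have hg := exp_mul_le_of_mul_le_deriv (g := fun x => deriv φ x - μ * φ x) (k := c - μ)
      (fun x => (hφ' x).hasDerivAt.sub ((hφ x).hasDerivAt.const_mul μ))
      (fun x _ => by linear_combination hsuper x + φ x * hroot) hs
    have := one_le_exp (mul_nonneg hk (sub_nonneg.2 hs))
    nlinarith
  exact not_bddAbove_range_of_le_deriv hφ (sub_pos.2 ht)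
    (fun s hs => by nlinarith [hgrowth s hs, hpos s]) hbdd

lemma exp_neg_mul_mul_le (hφ : Differentiable ℝ φ) (hpos : ∀ t, 0 < φ t) {μ : ℝ} (hμ : 0 ≤ μ)
    (hder : ∀ t, deriv φ t ≤ μ * φ t) {x y d : ℝ} (hxy : x ≤ y) (hd : y - x ≤ d) :
    exp (-μ * d) * φ y ≤ φ x := by
  have hg := exp_mul_le_of_mul_le_deriv (g := fun t => -φ t) (k := μ)
    (fun t => (hφ t).hasDerivAt.neg) (fun t _ => by linarith [hder t]) hxy
  have hexp : exp (-μ * d) * exp (μ * (y - x)) ≤ 1 := by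
    rw [← exp_add, exp_le_one_iff]
    nlinarith
  nlinarith [hpos x, exp_pos (-μ * d)]

/-- On the region `φ > U` the equation `φ'' ≥ cφ'` makes `e^{-ct}φ'` nondecreasing, so a bounded
`φ` cannot be increasing there: it would stay above `U` and grow at least linearly. -/
lemma deriv_nonpos_of_lt (hφ : Differentiable ℝ φ) (hφ' : Differentiable ℝ (deriv φ))
    (hbdd : BddAbove (range φ)) (hc : 0 ≤ c) {U : ℝ}
    (hsub : ∀ t, U < φ t → 0 ≤ deriv (deriv φ) t - c * deriv φ t) {ξ : ℝ} (hξ : U < φ ξ) :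
    deriv φ ξ ≤ 0 := by
  by_contra! hξ'
  have hgrowth : ∀ x, ξ ≤ x → (∀ y ∈ Ioo ξ x, U < φ y) → deriv φ ξ ≤ deriv φ x :=
    fun x hx hU => by
      have hg := exp_mul_le_of_mul_le_deriv (g := deriv φ) (k := c) (fun y => (hφ' y).hasDerivAt)
        (fun y hy => by linarith [hsub y (hU y hy)]) hx
      nlinarith [one_le_exp (mul_nonneg hc (sub_nonneg.2 hx))]
  have hstay : ∀ x, ξ ≤ x → U < φ x := by
    by_contra! h
    obtain ⟨x, hx, hxU⟩ := h
    set T := {y | ξ ≤ y ∧ φ y ≤ U}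
    have hTbdd : BddBelow T := ⟨ξ, fun y hy => hy.1⟩
    have hT : sInf T ∈ T := IsClosed.csInf_mem
      ((isClosed_le continuous_const continuous_id).inter
        (isClosed_le hφ.continuous continuous_const)) ⟨x, hx, hxU⟩ hTbdd
    have hbelow : ∀ y ∈ Ico ξ (sInf T), U < φ y :=
      fun y hy => not_le.1 fun h => (csInf_le hTbdd ⟨hy.1, h⟩).not_gt hy.2
    have hmono : MonotoneOn φ (Icc ξ (sInf T)) := by
      refine monotoneOn_of_deriv_nonneg (convex_Icc _ _) hφ.continuous.continuousOn
        hφ.differentiableOn fun y hy => ?_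
      rw [interior_Icc] at hy
      linarith [hgrowth y hy.1.le fun z hz => hbelow z ⟨hz.1.le, hz.2.trans hy.2⟩]
    linarith [hmono (left_mem_Icc.2 hT.1) (right_mem_Icc.2 hT.1) hT.1, hT.2]
  exact not_bddAbove_range_of_le_deriv hφ hξ'
    (fun x hx => hgrowth x hx fun y hy => hstay y hy.1.le) hbdd

lemma le_of_deriv_deriv_sub_nonneg (hφ : Differentiable ℝ φ) (hφ' : Differentiable ℝ (deriv φ))
    (hbdd : BddAbove (range φ)) (hc : 0 ≤ c) (h0 : Tendsto φ atBot (nhds 0)) {U : ℝ}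
    (hU : 0 < U) (hsub : ∀ t, U < φ t → 0 ≤ deriv (deriv φ) t - c * deriv φ t) (t₀ : ℝ) :
    φ t₀ ≤ U := by
  by_contra! ht₀
  obtain ⟨t₂, ht₂⟩ := (h0.eventually (gt_mem_nhds hU)).exists_forall_of_atBot
  set S := {t | t ≤ t₀ ∧ φ t ≤ U}
  have hSbdd : BddAbove S := ⟨t₀, fun t ht => ht.1⟩
  have hS : sSup S ∈ S := IsClosed.csSup_mem
    ((isClosed_le continuous_id continuous_const).inter
      (isClosed_le hφ.continuous continuous_const))
    ⟨min t₂ t₀, min_le_right _ _, (ht₂ _ (min_le_left _ _)).le⟩ hSbdd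
  have hanti : AntitoneOn φ (Icc (sSup S) t₀) := by
    refine antitoneOn_of_deriv_nonpos (convex_Icc _ _) hφ.continuous.continuousOn
      hφ.differentiableOn fun y hy => ?_
    rw [interior_Icc] at hy
    exact deriv_nonpos_of_lt hφ hφ' hbdd hc hsub
      (not_le.1 fun h => (le_csSup hSbdd ⟨hy.2.le, h⟩).not_gt hy.1)
  linarith [hanti (left_mem_Icc.2 hS.1) (right_mem_Icc.2 hS.1) hS.1, hS.2]

end SecondOrder

lemma exists_eq_forall_le_of_tendsto_atBot {φ : ℝ → ℝ} (hφ : Continuous φ)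
    (h0 : Tendsto φ atBot (nhds 0)) {L t₀ : ℝ} (hL : 0 < L) (ht₀ : L ≤ φ t₀) :
    ∃ ts, φ ts = L ∧ ∀ t ≤ ts, φ t ≤ L := by
  obtain ⟨t₂, ht₂⟩ := (h0.eventually (gt_mem_nhds hL)).exists_forall_of_atBot
  set S := {t | L ≤ φ t}
  have hSbdd : BddBelow S := ⟨t₂, fun t ht => not_lt.1 fun h => (ht₂ t h.le).not_ge ht⟩
  have hS : sInf S ∈ S := (isClosed_le continuous_const hφ).csInf_mem ⟨t₀, ht₀⟩ hSbdd
  have hle : Iic (sInf S) ⊆ {t | φ t ≤ L} := by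
    rw [← closure_Iio' ⟨sInf S - 1, by simp⟩]
    refine closure_minimal (fun t ht => ?_) (isClosed_le hφ continuous_const)
    exact (not_le.1 fun (h : L ≤ φ t) => (csInf_le hSbdd h).not_gt ht).le
  exact ⟨sInf S, le_antisymm (hle self_mem_Iic) hS, fun t ht => hle ht⟩

noncomputable def shiftedLaplace (K : ℝ → ℝ) (μ h : ℝ) : ℝ :=
  ∫ s in Ioi (-h), exp (-μ * (s + h)) * K s

section ShiftedLaplace

variable {K : ℝ → ℝ} {μ h : ℝ}

lemma shiftedLaplace_zero : shiftedLaplace K μ 0 = ∫ s in Ioi 0, exp (-μ * s) * K s := by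
  simp [shiftedLaplace]

lemma integrableOn_shiftedLaplace (hK : Integrable K) (hμ : 0 ≤ μ) :
    IntegrableOn (fun s => exp (-μ * (s + h)) * K s) (Ioi (-h)) := by
  refine hK.integrableOn.bdd_mul (c := 1) (by fun_prop) ?_
  filter_upwards [ae_restrict_mem measurableSet_Ioi] with s hs
  rw [norm_of_nonneg (exp_pos _).le, exp_le_one_iff]
  nlinarith [mem_Ioi.1 hs]

lemma shiftedLaplace_pos (hK : Integrable K) (hK0 : ∀ᵐ s, 0 ≤ K s) (hμ : 0 ≤ μ)
    (hmass : 0 < ∫ s in Ioi (-h), K s) : 0 < shiftedLaplace K μ h := by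
  rw [setIntegral_pos_iff_support_of_nonneg_ae (ae_restrict_of_ae hK0) hK.integrableOn]
    at hmass
  rw [shiftedLaplace, setIntegral_pos_iff_support_of_nonneg_ae
    (ae_restrict_of_ae (hK0.mono fun s hs => mul_nonneg (exp_pos _).le hs))
    (integrableOn_shiftedLaplace hK hμ), Function.support_mul,
    Function.support_eq_univ fun s => (exp_pos _).ne', univ_inter]
  exact hmass

lemma shiftedLaplace_le_integral (hK : Integrable K) (hK0 : ∀ᵐ s, 0 ≤ K s) (hμ : 0 ≤ μ) :
    shiftedLaplace K μ h ≤ ∫ s, K s := by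
  refine le_trans ?_ (setIntegral_le_integral (s := Ioi (-h)) hK hK0)
  refine setIntegral_mono_ae_restrict (integrableOn_shiftedLaplace hK hμ) hK.integrableOn ?_
  filter_upwards [ae_restrict_of_ae hK0, ae_restrict_mem measurableSet_Ioi] with s hKs hs
  refine mul_le_of_le_one_left hKs (exp_le_one_iff.2 ?_)
  nlinarith [mem_Ioi.1 hs]

lemma exists_pos_setIntegral_Ioi_neg (hK : Integrable K) (hmass : 0 < ∫ s, K s) :
    ∃ h, 0 ≤ h ∧ 0 < ∫ s in Ioi (-h), K s := by
  have hU : ⋃ h : ℝ, Ioi (-h) = univ :=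
    iUnion_eq_univ_iff.2 fun x => ⟨1 - x, by simp⟩
  have hlim := tendsto_setIntegral_of_monotone (μ := volume) (fun h : ℝ => measurableSet_Ioi)
    (fun _ _ hab => Ioi_subset_Ioi (neg_le_neg hab)) (by rw [hU]; exact hK.integrableOn)
  rw [hU, setIntegral_univ] at hlim
  obtain ⟨h, hpos, hh⟩ := ((hlim.eventually (eventually_gt_nhds hmass)).and
    (eventually_ge_atTop 0)).exists
  exact ⟨h, hh, hpos⟩

lemma shiftedLaplace_mul_le_conv (hK : Integrable K) (hK0 : ∀ᵐ s, 0 ≤ K s) (hμ : 0 ≤ μ)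
    {φ : ℝ → ℝ} (hφ : Differentiable ℝ φ) (hpos : ∀ t, 0 < φ t) (hbdd : BddAbove (range φ))
    (hder : ∀ t, deriv φ t ≤ μ * φ t) (t : ℝ) :
    shiftedLaplace K μ h * φ (t + h) ≤ conv K φ t := by
  obtain ⟨M, hM⟩ := hbdd
  have hint : Integrable (fun s => K s * φ (t - s)) := by
    refine hK.mul_bdd (c := M) (by have := hφ.continuous; fun_prop) (ae_of_all _ fun s => ?_)
    rw [norm_of_nonneg (hpos _).le]
    exact hM (mem_range_self _)
  calc shiftedLaplace K μ h * φ (t + h)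
      = ∫ s in Ioi (-h), exp (-μ * (s + h)) * K s * φ (t + h) := (integral_mul_const _ _).symm
    _ ≤ ∫ s in Ioi (-h), K s * φ (t - s) := by
        refine setIntegral_mono_ae_restrict ((integrableOn_shiftedLaplace hK hμ).mul_const _)
          hint.integrableOn ?_
        filter_upwards [ae_restrict_of_ae hK0, ae_restrict_mem measurableSet_Ioi] with s hKs hs
        have := exp_neg_mul_mul_le hφ hpos hμ hder (x := t - s) (y := t + h) (d := s + h)
          (by linarith [mem_Ioi.1 hs]) (by linarith)
        rw [mul_right_comm, mul_comm (K s)]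
        exact mul_le_mul_of_nonneg_right this hKs
    _ ≤ conv K φ t := setIntegral_le_integral hint (hK0.mono fun _ hs => mul_nonneg hs (hpos _).le)

end ShiftedLaplace

/-- From `f'' - cf' ≥ E` on `[b - 2, b]` and `f'(b) ≤ D`: `e^{-ct}(f' + E/c)` is nondecreasing,
so `f' ≤ e^{-c}(D + E/c) - E/c` on `[b - 2, b - 1]`. -/
lemma sub_le_of_le_deriv_deriv_sub {f : ℝ → ℝ} (hf : Differentiable ℝ f)
    (hf' : Differentiable ℝ (deriv f)) {c E D b : ℝ} (hc : 0 < c) (hE : 0 ≤ E) (hD : 0 ≤ D)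
    (hsub : ∀ t ∈ Icc (b - 2) b, E ≤ deriv (deriv f) t - c * deriv f t) (hb : deriv f b ≤ D) :
    f (b - 1) - f (b - 2) ≤ D - (1 - exp (-c)) / c * E := by
  have hderiv : ∀ t ∈ Icc (b - 2) (b - 1), deriv f t ≤ D - (1 - exp (-c)) / c * E := by
    rintro t ⟨ht₁, ht₂⟩
    have hg := exp_mul_le_of_mul_le_deriv (g := fun x => deriv f x + E / c) (k := c) (a := t)
      (b := b) (fun x => (hf' x).hasDerivAt.add_const _)
      (fun x hx => by
        have := hsub x ⟨by linarith [hx.1], hx.2.le⟩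
        field_simp
        linarith) (by linarith)
    have hdecay : exp (-c * (b - t)) * exp (c * (b - t)) = 1 := by rw [← exp_add]; simp
    have hle : exp (-c * (b - t)) ≤ exp (-c) := exp_le_exp.2 (by nlinarith)
    have hP : 0 ≤ D + E / c := by positivity
    have hexp : exp (-c) ≤ 1 := exp_le_one_iff.2 (by linarith)
    have key : deriv f t + E / c ≤ exp (-c) * (D + E / c) :=
      calc deriv f t + E / c = exp (-c * (b - t)) * (exp (c * (b - t)) * (deriv f t + E / c)) := by
            rw [← mul_assoc, hdecay, one_mul]
        _ ≤ exp (-c * (b - t)) * (D + E / c) :=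
            mul_le_mul_of_nonneg_left (by linarith) (exp_pos _).le
        _ ≤ exp (-c) * (D + E / c) := mul_le_mul_of_nonneg_right hle hP
    have : (1 - exp (-c)) / c * E = E / c - exp (-c) * (E / c) := by ring
    nlinarith
  have := (convex_Icc (b - 2) (b - 1)).image_sub_le_mul_sub_of_deriv_le
    hf.continuous.continuousOn hf.differentiableOn (fun x hx => hderiv x (interior_subset hx))
    (b - 2) (left_mem_Icc.2 (by linarith)) (b - 1) (right_mem_Icc.2 (by linarith)) (by linarith)
  linarith

section Window

variable {K φ : ℝ → ℝ} {c β μ h J ts : ℝ}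

/-- With `ρ = φ ts`: on the window, `φ ≥ e^{-μ(h+2)} ρ` and `K * φ ≥ J e^{-2μ} ρ` because
`e^{-μt} φ` is nonincreasing, and `g_β(φ) = φ` because `φ ≤ ρ ≤ β`. -/
lemma le_deriv_deriv_sub_of_forall_le (heq : TruncProfileEq K c β φ) (hφ : Differentiable ℝ φ)
    (hpos : ∀ t, 0 < φ t) (hμ : 0 ≤ μ) (hder : ∀ t, deriv φ t ≤ μ * φ t) (hh : 0 ≤ h)
    (hJ : 0 ≤ J) (hconv : ∀ t, J * φ (t + h) ≤ conv K φ t) (hmax : ∀ t ≤ ts, φ t ≤ φ ts)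
    (hβ : φ ts ≤ β) (hρ : 1 ≤ J * exp (-2 * μ) * φ ts) :
    ∀ t ∈ Icc (ts - h - 2) (ts - h),
      exp (-μ * (h + 2)) * φ ts * (J * exp (-2 * μ) * φ ts - 1) ≤
        deriv (deriv φ) t - c * deriv φ t := by
  rintro t ⟨ht₁, ht₂⟩
  have hφt : exp (-μ * (h + 2)) * φ ts ≤ φ t :=
    exp_neg_mul_mul_le hφ hpos hμ hder (by linarith) (by linarith)
  have hshift : exp (-2 * μ) * φ ts ≤ φ (t + h) := by
    rw [show -2 * μ = -μ * 2 by ring]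
    exact exp_neg_mul_mul_le hφ hpos hμ hder (by linarith) (by linarith)
  have hK : J * exp (-2 * μ) * φ ts ≤ conv K φ t := by
    rw [mul_assoc]
    exact (mul_le_mul_of_nonneg_left hshift hJ).trans (hconv t)
  rw [heq.deriv_deriv_sub, gbeta_of_le ((hmax t (by linarith)).trans hβ)]
  exact mul_le_mul hφt (by linarith) (by linarith) (hpos t).le

lemma mul_sub_one_lt_of_forall_le (heq : TruncProfileEq K c β φ) (hφ : Differentiable ℝ φ)
    (hφ' : Differentiable ℝ (deriv φ)) (hpos : ∀ t, 0 < φ t) (hc : 0 < c) (hμ : 0 ≤ μ)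
    (hder : ∀ t, deriv φ t ≤ μ * φ t) (hh : 0 ≤ h) (hJ : 0 ≤ J)
    (hconv : ∀ t, J * φ (t + h) ≤ conv K φ t) (hmax : ∀ t ≤ ts, φ t ≤ φ ts) (hβ : φ ts ≤ β)
    (hρ : 1 ≤ J * exp (-2 * μ) * φ ts) :
    (1 - exp (-c)) / c * exp (-μ * (h + 2)) * (J * exp (-2 * μ) * φ ts - 1) < 1 + μ := by
  have hwin := sub_le_of_le_deriv_deriv_sub hφ hφ' hc
    (by have := hpos ts; positivity) (mul_nonneg hμ (hpos ts).le)
    (le_deriv_deriv_sub_of_forall_le heq hφ hpos hμ hder hh hJ hconv hmax hβ hρ)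
    ((hder _).trans (mul_le_mul_of_nonneg_left (hmax _ (by linarith)) hμ))
  have h₁ := hpos (ts - h - 1)
  have h₂ := hmax (ts - h - 2) (by linarith)
  refine lt_of_mul_lt_mul_right ?_ (hpos ts).le
  linarith

end Window

def IsAPrioriBound (K : ℝ → ℝ) (c U : ℝ) : Prop :=
  ∀ (β : ℝ) (φ : ℝ → ℝ), U < β →
    ContDiff ℝ 2 φ → (∀ t, 0 < φ t) → (∃ M, ∀ t, φ t ≤ M) →
    TruncProfileEq K c β φ → Tendsto φ atBot (nhds 0) → ∀ t, φ t ≤ U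

section APrioriBound

variable {K : ℝ → ℝ} {c : ℝ}

lemma TruncProfileEq.deriv_le_lam_mul {β : ℝ} {φ : ℝ → ℝ} (heq : TruncProfileEq K c β φ)
    (hc : 2 ≤ c) (hK0 : ∀ᵐ s, 0 ≤ K s) (hφ : ContDiff ℝ 2 φ) (hpos : ∀ t, 0 < φ t)
    (hbdd : BddAbove (range φ)) (t : ℝ) : deriv φ t ≤ lam c * φ t :=
  deriv_le_mul_of_bddAbove (hφ.differentiable (by norm_num)) hφ.differentiable_deriv_of_two hpos
    hbdd (lam_pos hc) (lam_sq_sub_mul_add_one hc) (heq.deriv_deriv_sub_add_nonneg hK0 hpos) t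

lemma exists_one_le_isAPrioriBound (hc : 2 ≤ c) (hK : Integrable K) (hK0 : ∀ᵐ s, 0 ≤ K s)
    (hK1 : 0 < ∫ s, K s) : ∃ U, 1 ≤ U ∧ IsAPrioriBound K c U := by
  obtain ⟨h, hh, hmass⟩ := exists_pos_setIntegral_Ioi_neg hK hK1
  set μ := lam c
  have hμ : 0 < μ := lam_pos hc
  have hJ := shiftedLaplace_pos hK hK0 hμ.le hmass
  set J := shiftedLaplace K μ h
  set A := J * exp (-2 * μ)
  set B := (1 - exp (-c)) / c * exp (-μ * (h + 2))
  have hA : 0 < A := by positivity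
  have hB : 0 < B := by
    have : exp (-c) < 1 := exp_lt_one_iff.2 (by linarith)
    have : 0 < 1 - exp (-c) := by linarith
    positivity
  refine ⟨max 1 ((1 + (1 + μ) / B) / A), le_max_left _ _, ?_⟩
  rintro β φ hβ hφ hpos ⟨M, hM⟩ heq h0 t₀
  by_contra! ht₀
  have hbdd : BddAbove (range φ) := ⟨M, forall_mem_range.2 hM⟩
  have hder := heq.deriv_le_lam_mul hc hK0 hφ hpos hbdd
  have hφ₁ : Differentiable ℝ φ := hφ.differentiable (by norm_num)
  have hL : max 1 ((1 + (1 + μ) / B) / A) < min (φ t₀) β := lt_min ht₀ hβ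
  obtain ⟨ts, hts, hmax⟩ := exists_eq_forall_le_of_tendsto_atBot hφ₁.continuous h0
    (by linarith [le_max_left 1 ((1 + (1 + μ) / B) / A)]) (min_le_left (φ t₀) β)
  have hAL : 1 + (1 + μ) / B < A * φ ts := by
    rw [hts, ← div_lt_iff₀' hA]
    exact (le_max_right _ _).trans_lt hL
  have hwin := mul_sub_one_lt_of_forall_le heq hφ₁ hφ.differentiable_deriv_of_two hpos
    (by linarith) hμ.le hder hh hJ.le
    (fun t => shiftedLaplace_mul_le_conv hK hK0 hμ.le hφ₁ hpos hbdd hder t)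
    (fun t ht => hts ▸ hmax t ht) (hts ▸ min_le_right _ _)
    (by linarith [div_pos (by linarith : 0 < 1 + μ) hB])
  have := (div_lt_iff₀' hB).1 (by linarith : (1 + μ) / B < A * φ ts - 1)
  linarith

lemma isAPrioriBound_inv (hc : 2 ≤ c) (hK : Integrable K) (hK0 : ∀ᵐ s, 0 ≤ K s)
    (hK1 : ∫ s, K s ≤ 1) (hP : 0 < ∫ s in Ioi (0 : ℝ), K s) :
    1 ≤ (∫ s in Ioi (0 : ℝ), exp (-(lam c) * s) * K s)⁻¹ ∧
      IsAPrioriBound K c (∫ s in Ioi (0 : ℝ), exp (-(lam c) * s) * K s)⁻¹ := by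
  have hμ := (lam_pos hc).le
  set I := ∫ s in Ioi (0 : ℝ), exp (-(lam c) * s) * K s
  have hI : shiftedLaplace K (lam c) 0 = I := shiftedLaplace_zero
  have hIpos : 0 < I := hI ▸ shiftedLaplace_pos hK hK0 hμ (by simpa using hP)
  have hI1 : I ≤ 1 := by
    rw [← hI]
    exact (shiftedLaplace_le_integral hK hK0 hμ).trans hK1
  refine ⟨one_le_inv_iff₀.2 ⟨hIpos, hI1⟩, ?_⟩
  rintro β φ - hφ hpos ⟨M, hM⟩ heq h0
  have hbdd : BddAbove (range φ) := ⟨M, forall_mem_range.2 hM⟩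
  have hφ₁ : Differentiable ℝ φ := hφ.differentiable (by norm_num)
  refine le_of_deriv_deriv_sub_nonneg (c := c) hφ₁ hφ.differentiable_deriv_of_two hbdd
    (by linarith) h0 (inv_pos.2 hIpos) fun t ht => ?_
  have hconv := shiftedLaplace_mul_le_conv (h := 0) hK hK0 hμ hφ₁ hpos hbdd
    (heq.deriv_le_lam_mul hc hK0 hφ hpos hbdd) t
  rw [hI, add_zero] at hconv
  have : 1 < conv K φ t :=
    calc 1 = I * I⁻¹ := (mul_inv_cancel₀ hIpos.ne').symm
      _ < I * φ t := mul_lt_mul_of_pos_left ht hIpos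
      _ ≤ conv K φ t := hconv
  rw [heq.deriv_deriv_sub]
  exact mul_nonneg (gbeta_nonneg (hpos t).le) (by linarith)

end APrioriBound

/-- existence of a uniform a priori bound `U(c,K) ≥ 1` for all
positive bounded solutions with `φ(-∞) = 0` of the truncated profile equation
with `β > U(c,K)`; if `∫_0^∞ K > 0`, the explicit value
`(∫_0^∞ e^{-λ(c)s}K(s)ds)⁻¹` works. -/
theorem uniform_a_priori_bound
    (c : ℝ) (hc : 2 ≤ c)
    (K : ℝ → ℝ) (hKi : Integrable K)
    (hK0 : ∀ᵐ s ∂(volume : Measure ℝ), 0 ≤ K s)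
    (hK1 : (∫ s, K s) = 1) :
    (∃ U : ℝ, 1 ≤ U ∧
      ∀ (β : ℝ) (φ : ℝ → ℝ), U < β →
        ContDiff ℝ 2 φ → (∀ t, 0 < φ t) → (∃ M, ∀ t, φ t ≤ M) →
        TruncProfileEq K c β φ → Tendsto φ atBot (nhds 0) →
        ∀ t, φ t ≤ U) ∧
    (0 < ∫ s in Ioi (0 : ℝ), K s →
      1 ≤ (∫ s in Ioi (0 : ℝ), Real.exp (-(lam c) * s) * K s)⁻¹ ∧
      ∀ (β : ℝ) (φ : ℝ → ℝ),
        (∫ s in Ioi (0 : ℝ), Real.exp (-(lam c) * s) * K s)⁻¹ < β →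
        ContDiff ℝ 2 φ → (∀ t, 0 < φ t) → (∃ M, ∀ t, φ t ≤ M) →
        TruncProfileEq K c β φ → Tendsto φ atBot (nhds 0) →
        ∀ t, φ t ≤ (∫ s in Ioi (0 : ℝ), Real.exp (-(lam c) * s) * K s)⁻¹) :=
  ⟨exists_one_le_isAPrioriBound hc hKi hK0 (hK1 ▸ one_pos),
    isAPrioriBound_inv hc hKi hK0 hK1.le⟩
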